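/- Let G be a finite directed multigraph and let A = {a_1, …, a_k}, B = {b_1, …, b_k} be ordered k-subsets of its vertices. Suppose (P, C) with P = (P_1, …, P_k) ∈ 𝒫̃_{A,B}(G) and C ∈ 𝒞(G) is not a self-avoiding flow, and let i be minimal such that P_i is not self-avoiding, or P_i meets C, or P_i meets some P_{i'} with i' > i. If the first offending vertex along P_i (the tail of the earliest edge e_q of P_i lying on C, on a later P_{i'}, or repeated as a tail within P_i) lies on some P_{i'} with i' > i, then swapping the tails of P_i and P_{i'} at that vertex produces a path collection P* ∈ 𝒫̃_{A,B}(G) with P* ≠ P, using exactly the same multiset of edges as P (so wt(P*) = wt(P)), whose associated permutation differs from that of P by a transposition (so sgn(P*) = − sgn(P)). -/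

import Mathlib

open MvPowerSeries

noncomputable section

namespace PathMatrix

variable {n k : ℕ} {E : Type} [Fintype E]

/-- `IsWalkFrom src tgt u v l` : the list of edges `l` forms a directed walk (path)
from vertex `u` to vertex `v`, traversing the edges head-to-tail. -/
def IsWalkFrom (src tgt : E → Fin n) : Fin n → Fin n → List E → Prop
  | u, v, [] => u = v
  | u, v, e :: l => src e = u ∧ IsWalkFrom src tgt (tgt e) v l

/-- The weight of a path: the product of the variables of its edges (with multiplicity). -/
def pathWt (l : List E) : MvPowerSeries E ℤ :=
  (l.map fun e => (X e : MvPowerSeries E ℤ)).prod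

/-- The weighted adjacency matrix. -/
def adjMat (src tgt : E → Fin n) : Matrix (Fin n) (Fin n) (MvPowerSeries E ℤ) :=
  fun i j => ∑ e : E, if src e = i ∧ tgt e = j then (X e : MvPowerSeries E ℤ) else 0

/-- The list of vertices visited by a walk starting at `u` with edge list `l`. -/
def walkVerts (tgt : E → Fin n) (u : Fin n) (l : List E) : List (Fin n) :=
  u :: l.map tgt

/-- A self-avoiding cycle, recorded as a list of edges starting (canonically) at the
least vertex it visits. -/
def IsCycleMin (src tgt : E → Fin n) (l : List E) : Prop :=
  l ≠ [] ∧ ∃ v : Fin n, IsWalkFrom src tgt v v l ∧ (l.map src).Nodup ∧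
    ∀ u ∈ l.map src, v ≤ u

/-- `𝒞(G)`: collections of pairwise vertex-disjoint self-avoiding cycles. -/
def CycColls (src tgt : E → Fin n) : Set (Finset (List E)) :=
  {C | (∀ l ∈ C, IsCycleMin src tgt l) ∧
    ∀ l ∈ C, ∀ l' ∈ C, l ≠ l' → ∀ v ∈ l.map src, v ∉ l'.map src}

/-- The weight of a cycle collection. -/
def cycWt (C : Finset (List E)) : MvPowerSeries E ℤ := ∏ l ∈ C, pathWt l

/-- The sign of a cycle collection, `(-1)^{number of cycles}`. -/
def cycSgn (C : Finset (List E)) : ℤ := (-1) ^ C.card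

/-- Membership in `𝒫̃_{A,B,π}(G)`. -/
def TuplePaths (src tgt : E → Fin n) (a b : Fin k → Fin n)
    (π : Equiv.Perm (Fin k)) (P : Fin k → List E) : Prop :=
  ∀ i, IsWalkFrom src tgt (a i) (b (π i)) (P i)

/-- Membership in `𝒫_{A,B,π}(G)`: self-avoiding, pairwise vertex-disjoint paths. -/
def IsSystem (src tgt : E → Fin n) (a b : Fin k → Fin n)
    (π : Equiv.Perm (Fin k)) (P : Fin k → List E) : Prop :=
  TuplePaths src tgt a b π P ∧
  (∀ i, (walkVerts tgt (a i) (P i)).Nodup) ∧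
  ∀ i j, i ≠ j → ∀ v ∈ walkVerts tgt (a i) (P i), v ∉ walkVerts tgt (a j) (P j)

/-- `ℱ_{A,B}(G)`: self-avoiding flows `(π, P, C)`. -/
def Flows (src tgt : E → Fin n) (a b : Fin k → Fin n) :
    Set (Equiv.Perm (Fin k) × (Fin k → List E) × Finset (List E)) :=
  {F | IsSystem src tgt a b F.1 F.2.1 ∧ F.2.2 ∈ CycColls src tgt ∧
    ∀ i, ∀ v ∈ walkVerts tgt (a i) (F.2.1 i), ∀ l ∈ F.2.2, v ∉ l.map src}

/-- The weight of a path collection. -/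
def colWt (P : Fin k → List E) : MvPowerSeries E ℤ := ∏ i, pathWt (P i)

/-- The sign and weight of a flow. -/
def flowSgn (F : Equiv.Perm (Fin k) × (Fin k → List E) × Finset (List E)) : ℤ :=
  (Equiv.Perm.sign F.1 : ℤ) * cycSgn F.2.2

def flowWt (F : Equiv.Perm (Fin k) × (Fin k → List E) × Finset (List E)) :
    MvPowerSeries E ℤ :=
  colWt F.2.1 * cycWt F.2.2

/-- The product (coefficientwise) topology on formal power series, with `ℤ` discrete. -/
instance : TopologicalSpace (MvPowerSeries E ℤ) :=
  inferInstanceAs (TopologicalSpace ((E →₀ ℕ) → ℤ))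


/-- Path `P i` "offends": it is not self-avoiding, or meets the cycle collection `C`,
or meets a later path `P i'` with `i' > i`. -/
def OffendsAt (src tgt : E → Fin n) (a : Fin k → Fin n) (P : Fin k → List E)
    (C : Finset (List E)) (i : Fin k) : Prop :=
  ¬ (walkVerts tgt (a i) (P i)).Nodup ∨
  (∃ v ∈ walkVerts tgt (a i) (P i), ∃ l ∈ C, v ∈ l.map src) ∨
  (∃ i', i < i' ∧ ∃ v ∈ walkVerts tgt (a i) (P i), v ∈ walkVerts tgt (a i') (P i'))

/-- The tail of the `q`-th edge of `P i` offends: it lies on `C`, or on a later path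
`P i'` with `i' > i`, or it recurs as the tail of a later edge of `P i`. -/
def TailOffends (src tgt : E → Fin n) (a : Fin k → Fin n) (P : Fin k → List E)
    (C : Finset (List E)) (i : Fin k) (q : ℕ) : Prop :=
  ∃ hq : q < (P i).length,
    (∃ l ∈ C, src ((P i).get ⟨q, hq⟩) ∈ l.map src) ∨
    (∃ i', i < i' ∧ src ((P i).get ⟨q, hq⟩) ∈ walkVerts tgt (a i') (P i')) ∨
    (∃ r, ∃ hr : r < (P i).length, q < r ∧
      src ((P i).get ⟨r, hr⟩) = src ((P i).get ⟨q, hq⟩))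

/-! Both tails start at the common vertex `v`, so exchanging them yields walks
`a i ⇝ b (π i')` and `a i' ⇝ b (π i)`, i.e. a tuple for the permutation `π * (i i')`, while the
edges are merely redistributed between the two paths. The new tuple differs from `P` because,
`b` being injective, a tuple of walks determines its permutation. -/

section
omit [Fintype E]

variable {src tgt : E → Fin n}

theorem IsWalkFrom.append {u v w : Fin n} {l₁ l₂ : List E}
    (h₁ : IsWalkFrom src tgt u v l₁) (h₂ : IsWalkFrom src tgt v w l₂) :
    IsWalkFrom src tgt u w (l₁ ++ l₂) := by
  induction l₁ generalizing u with
  | nil => cases (h₁ : u = v); exact h₂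
  | cons e l ih => exact ⟨h₁.1, ih h₁.2⟩

theorem IsWalkFrom.right_unique {u w w' : Fin n} {l : List E}
    (h : IsWalkFrom src tgt u w l) (h' : IsWalkFrom src tgt u w' l) : w = w' := by
  induction l generalizing u with
  | nil => exact (h : u = w).symm.trans h'
  | cons e l ih => exact ih h.2 h'.2

theorem IsWalkFrom.take_drop {u w : Fin n} {l : List E} (h : IsWalkFrom src tgt u w l)
    (q : ℕ) (hq : q < (walkVerts tgt u l).length) :
    IsWalkFrom src tgt u (walkVerts tgt u l)[q] (l.take q) ∧
      IsWalkFrom src tgt (walkVerts tgt u l)[q] w (l.drop q) := by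
  induction l generalizing u q with
  | nil =>
    obtain rfl : q = 0 := by simpa [walkVerts] using hq
    exact ⟨rfl, h⟩
  | cons e l ih =>
    cases q with
    | zero => exact ⟨rfl, h⟩
    | succ q =>
      have hq : q < (walkVerts tgt (tgt e) l).length := by simpa [walkVerts] using hq
      exact ⟨⟨h.1, (ih h.2 q hq).1⟩, (ih h.2 q hq).2⟩

theorem IsWalkFrom.src_getElem {u w : Fin n} {l : List E} (h : IsWalkFrom src tgt u w l)
    {q : ℕ} (hq : q < l.length) :
    src l[q] = (walkVerts tgt u l)[q]'(by simp [walkVerts]; omega) := by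
  induction l generalizing u q with
  | nil => simp at hq
  | cons e l ih =>
    cases q with
    | zero => exact h.1
    | succ q => exact ih h.2 (by simpa using hq)

@[to_additive]
theorem _root_.Fintype.prod_update_update {ι M : Type*} [Fintype ι] [DecidableEq ι] [CommMonoid M]
    (g : ι → M) {i i' : ι} (h : i ≠ i') {x y : M} (hxy : x * y = g i * g i') :
    ∏ j, Function.update (Function.update g i x) i' y j = ∏ j, g j := by
  rw [← Finset.prod_mul_prod_compl {i, i'}, ← Finset.prod_mul_prod_compl {i, i'} g,
    Finset.prod_pair h, Finset.prod_pair h]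
  congr 1
  · simpa [Function.update_of_ne h] using hxy
  · refine Finset.prod_congr rfl fun j hj => ?_
    simp only [Finset.mem_compl, Finset.mem_insert, Finset.mem_singleton, not_or] at hj
    rw [Function.update_of_ne hj.2, Function.update_of_ne hj.1]

def swapTails {ι : Type*} [DecidableEq ι] (P : ι → List E) (i i' : ι) (q q' : ℕ) : ι → List E :=
  Function.update (Function.update P i ((P i).take q ++ (P i').drop q')) i'
    ((P i').take q' ++ (P i).drop q)

section

variable {ι : Type*} [DecidableEq ι] {P : ι → List E} {i i' : ι}

theorem swapTails_apply_left (h : i ≠ i') (q q' : ℕ) :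
    swapTails P i i' q q' i = (P i).take q ++ (P i').drop q' := by
  rw [swapTails, Function.update_of_ne h, Function.update_self]

theorem swapTails_apply_right (q q' : ℕ) :
    swapTails P i i' q q' i' = (P i').take q' ++ (P i).drop q :=
  Function.update_self ..

theorem swapTails_apply_of_ne {j : ι} (hi : j ≠ i) (hi' : j ≠ i') (q q' : ℕ) :
    swapTails P i i' q q' j = P j := by
  rw [swapTails, Function.update_of_ne hi', Function.update_of_ne hi]

@[to_additive]
theorem prod_swapTails [Fintype ι] {M : Type*} [CommMonoid M] (f : List E → M)
    (hf : ∀ l₁ l₂, f (l₁ ++ l₂) = f l₁ * f l₂) (h : i ≠ i') (q q' : ℕ) :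
    ∏ j, f (swapTails P i i' q q' j) = ∏ j, f (P j) := by
  have hsplit : ∀ l : List E, ∀ r, f l = f (l.take r) * f (l.drop r) := fun l r => by
    rw [← hf, List.take_append_drop]
  simp_rw [swapTails, ← Function.comp_apply (f := f), Function.comp_update]
  refine Fintype.prod_update_update (f ∘ P) h ?_
  simp only [Function.comp_apply, hf, hsplit (P i) q, hsplit (P i') q']
  ac_rfl

end

theorem colWt_swapTails {P : Fin k → List E} {i i' : Fin k} (h : i ≠ i') (q q' : ℕ) :
    colWt (swapTails P i i' q q') = colWt P :=
  prod_swapTails pathWt (fun l₁ l₂ => by simp [pathWt]) h q q'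

variable {a b : Fin k → Fin n} {P : Fin k → List E}

theorem TuplePaths.swapTails {π : Equiv.Perm (Fin k)} (hP : TuplePaths src tgt a b π P)
    {i i' : Fin k} (h : i ≠ i') {q q' : ℕ} (hq : q < (walkVerts tgt (a i) (P i)).length)
    (hq' : q' < (walkVerts tgt (a i') (P i')).length)
    (hv : (walkVerts tgt (a i) (P i))[q] = (walkVerts tgt (a i') (P i'))[q']) :
    TuplePaths src tgt a b (π * Equiv.swap i i') (swapTails P i i' q q') := by
  obtain ⟨hi₁, hi₂⟩ := (hP i).take_drop q hq
  obtain ⟨hi'₁, hi'₂⟩ := (hP i').take_drop q' hq'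
  rw [hv] at hi₁ hi₂
  intro j
  rcases eq_or_ne j i with rfl | hji
  · rw [swapTails_apply_left h, Equiv.Perm.mul_apply, Equiv.swap_apply_left]
    exact hi₁.append hi'₂
  rcases eq_or_ne j i' with rfl | hji'
  · rw [swapTails_apply_right, Equiv.Perm.mul_apply, Equiv.swap_apply_right]
    exact hi'₁.append hi₂
  · rw [swapTails_apply_of_ne hji hji', Equiv.Perm.mul_apply,
      Equiv.swap_apply_of_ne_of_ne hji hji']
    exact hP j

theorem TuplePaths.perm_eq (hb : Function.Injective b) {π σ : Equiv.Perm (Fin k)}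
    (hπ : TuplePaths src tgt a b π P) (hσ : TuplePaths src tgt a b σ P) : π = σ :=
  Equiv.ext fun j => hb ((hπ j).right_unique (hσ j))

end

theorem tail_swap_general (src tgt : E → Fin n) (a b : Fin k → Fin n)
    (hb : Function.Injective b)
    (π : Equiv.Perm (Fin k)) (P : Fin k → List E)
    (hP : TuplePaths src tgt a b π P)
    (i : Fin k)
    (q : ℕ) (hq : q < (P i).length) (v : Fin n)
    (hv : src ((P i).get ⟨q, hq⟩) = v)
    (i' : Fin k) (hii' : i < i')
    (q' : ℕ) (hq' : q' < (walkVerts tgt (a i') (P i')).length)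
    (hvq' : (walkVerts tgt (a i') (P i')).get ⟨q', hq'⟩ = v) :
    ∀ P' : Fin k → List E,
      P' = Function.update
          (Function.update P i ((P i).take q ++ (P i').drop q')) i'
          ((P i').take q' ++ (P i).drop q) →
      TuplePaths src tgt a b (π * Equiv.swap i i') P' ∧
      P' ≠ P ∧
      (∑ j : Fin k, ((P' j : List E) : Multiset E)) =
        (∑ j : Fin k, ((P j : List E) : Multiset E)) ∧
      colWt P' = colWt P ∧
      Equiv.Perm.sign (π * Equiv.swap i i') = - Equiv.Perm.sign π := by
  rintro _ rfl
  have hii : i ≠ i' := hii'.ne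
  have hqv : q < (walkVerts tgt (a i) (P i)).length := by simp [walkVerts]; omega
  have hvert : (walkVerts tgt (a i) (P i))[q] = (walkVerts tgt (a i') (P i'))[q'] := by
    rw [← (hP i).src_getElem hq]
    simpa using hv.trans hvq'.symm
  have hP' := hP.swapTails hii hqv hq' hvert
  refine ⟨hP', fun heq => ?_,
    sum_swapTails ((↑) : List E → Multiset E) (fun _ _ => (Multiset.coe_add _ _).symm) hii q q',
    colWt_swapTails hii q q', by rw [map_mul, Equiv.Perm.sign_swap hii, mul_neg_one]⟩
  have hπ : π = π * Equiv.swap i i' :=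
    hP.perm_eq hb ((show swapTails P i i' q q' = P from heq) ▸ hP')
  exact hii (Equiv.swap_eq_one_iff.mp (mul_eq_left.mp hπ.symm))

/-- the tail-swapping case of the involution.  Suppose `(P, C)` is
not a self-avoiding flow, `i` is minimal such that `P i` offends, the tail `v` of the
`q`-th edge of `P i` is the first offending vertex along `P i`, and `v` lies on a later
path; let `i' > i` be minimal with `v` on `P i'` and `q'` the first position of `v`
along `P i'`.  Then swapping the tails of `P i` and `P i'` at `v` produces
`P* ∈ 𝒫̃_{A,B}(G)` with `P* ≠ P`, using the same multiset of edges as `P` (so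
`wt P* = wt P`), and whose permutation differs from `π` by the transposition `(i i')`
(so the sign is reversed). -/
theorem tail_swap (src tgt : E → Fin n) (a b : Fin k → Fin n)
    (ha : Function.Injective a) (hb : Function.Injective b)
    (π : Equiv.Perm (Fin k)) (P : Fin k → List E) (C : Finset (List E))
    (hP : TuplePaths src tgt a b π P) (hC : C ∈ CycColls src tgt)
    (i : Fin k) (hi : OffendsAt src tgt a P C i)
    (himin : ∀ j, OffendsAt src tgt a P C j → i ≤ j)
    (q : ℕ) (hq : q < (P i).length) (v : Fin n)
    (hv : src ((P i).get ⟨q, hq⟩) = v)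
    (hqoff : TailOffends src tgt a P C i q)
    (hqmin : ∀ r, TailOffends src tgt a P C i r → q ≤ r)
    (i' : Fin k) (hii' : i < i') (hvi' : v ∈ walkVerts tgt (a i') (P i'))
    (hi'min : ∀ j, i < j → v ∈ walkVerts tgt (a j) (P j) → i' ≤ j)
    (q' : ℕ) (hq' : q' < (walkVerts tgt (a i') (P i')).length)
    (hvq' : (walkVerts tgt (a i') (P i')).get ⟨q', hq'⟩ = v)
    (hq'min : ∀ r (hr : r < (walkVerts tgt (a i') (P i')).length),
      (walkVerts tgt (a i') (P i')).get ⟨r, hr⟩ = v → q' ≤ r) :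
    ∀ P' : Fin k → List E,
      P' = Function.update
          (Function.update P i ((P i).take q ++ (P i').drop q')) i'
          ((P i').take q' ++ (P i).drop q) →
      TuplePaths src tgt a b (π * Equiv.swap i i') P' ∧
      P' ≠ P ∧
      (∑ j : Fin k, ((P' j : List E) : Multiset E)) =
        (∑ j : Fin k, ((P j : List E) : Multiset E)) ∧
      colWt P' = colWt P ∧
      Equiv.Perm.sign (π * Equiv.swap i i') = - Equiv.Perm.sign π :=
  tail_swap_general src tgt a b hb π P hP i q hq v hv i' hii' q' hq' hvq'

end PathMatrix
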